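/- arXiv:2201.12742 — 5 statements merged into one kernel-verified Lean document; each statement's English description precedes it below -/
import Mathlib

section
/- Let p : (0,∞) → ℝ be C¹ with p(s) > 0, p'(s) > 0, and lim_{s→0+} s·p'(s)/p(s) = γ̄ ∈ (4/3, ∞). Then γ̄ = sup{ a > 0 : sup_{0 < s ≤ ρ₀} s^{-a} p(s) < ∞ } for any fixed ρ₀ > 0. -/
open Real Set Filter Topology

-- derivative computation for g s = p s * s ^ (-r)
lemma aux_hasDeriv (p : ℝ → ℝ) (r x : ℝ) (hx : 0 < x)
    (hd : DifferentiableAt ℝ p x) :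
    HasDerivAt (fun s => p s * s ^ (-r)) (x ^ (-r - 1) * (x * deriv p x - r * p x)) x := by
  have h1 : HasDerivAt (fun s : ℝ => s ^ (-r)) (-r * x ^ (-r - 1)) x :=
    Real.hasDerivAt_rpow_const (Or.inl hx.ne')
  have h2 := hd.hasDerivAt.mul h1
  refine h2.congr_deriv ?_
  have : x ^ (-r) = x ^ (-r - 1) * x := by
    rw [← Real.rpow_add_one hx.ne' (-r - 1)]; ring_nf
  rw [this]; ring

lemma aux_mono (p : ℝ → ℝ) (r δ : ℝ) (hδ : 0 < δ)
    (hd : ∀ x : ℝ, 0 < x → DifferentiableAt ℝ p x)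
    (hpos : ∀ s : ℝ, 0 < s → 0 < p s)
    (h : ∀ s ∈ Ioc (0:ℝ) δ, r < s * deriv p s / p s) :
    ∀ s ∈ Ioc (0:ℝ) δ, p s * s ^ (-r) ≤ p δ * δ ^ (-r) := by
  have hmono : StrictMonoOn (fun s => p s * s ^ (-r)) (Ioc (0:ℝ) δ) := by
    apply strictMonoOn_of_deriv_pos (convex_Ioc 0 δ)
    · intro x hx
      exact ((hd x hx.1).mul (Real.differentiableAt_rpow_const_of_ne (-r) hx.1.ne')).continuousAt.continuousWithinAt
    · intro x hx
      rw [interior_Ioc] at hx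
      have hx0 : 0 < x := hx.1
      rw [(aux_hasDeriv p r x hx0 (hd x hx0)).deriv]
      have h1 : 0 < x ^ (-r - 1) := Real.rpow_pos_of_pos hx0 _
      have h2 : r < x * deriv p x / p x := h x ⟨hx0, hx.2.le⟩
      have h3 : r * p x < x * deriv p x := (lt_div_iff₀ (hpos x hx0)).mp h2
      nlinarith
  intro s hs
  rcases eq_or_lt_of_le hs.2 with h' | h'
  · subst h'; exact le_refl _
  · exact le_of_lt (hmono hs ⟨hδ, le_refl δ⟩ h')

lemma aux_anti (p : ℝ → ℝ) (r δ : ℝ) (hδ : 0 < δ)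
    (hd : ∀ x : ℝ, 0 < x → DifferentiableAt ℝ p x)
    (hpos : ∀ s : ℝ, 0 < s → 0 < p s)
    (h : ∀ s ∈ Ioc (0:ℝ) δ, s * deriv p s / p s < r) :
    ∀ s ∈ Ioc (0:ℝ) δ, p δ * δ ^ (-r) ≤ p s * s ^ (-r) := by
  have hanti : StrictAntiOn (fun s => p s * s ^ (-r)) (Ioc (0:ℝ) δ) := by
    apply strictAntiOn_of_deriv_neg (convex_Ioc 0 δ)
    · intro x hx
      exact ((hd x hx.1).mul (Real.differentiableAt_rpow_const_of_ne (-r) hx.1.ne')).continuousAt.continuousWithinAt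
    · intro x hx
      rw [interior_Ioc] at hx
      have hx0 : 0 < x := hx.1
      rw [(aux_hasDeriv p r x hx0 (hd x hx0)).deriv]
      have h1 : 0 < x ^ (-r - 1) := Real.rpow_pos_of_pos hx0 _
      have h2 : x * deriv p x / p x < r := h x ⟨hx0, hx.2.le⟩
      have h3 : x * deriv p x < r * p x := (div_lt_iff₀ (hpos x hx0)).mp h2
      nlinarith
  intro s hs
  rcases eq_or_lt_of_le hs.2 with h' | h'
  · subst h'; exact le_refl _
  · exact le_of_lt (hanti hs ⟨hδ, le_refl δ⟩ h')

lemma aux_tendsto_rpow_neg (η : ℝ) (hη : 0 < η) :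
    Tendsto (fun s : ℝ => s ^ (-η)) (𝓝[>] (0:ℝ)) atTop := by
  have h1 : Tendsto (fun s : ℝ => s ^ η) (𝓝[>] (0:ℝ)) (𝓝[>] (0:ℝ)) := by
    rw [tendsto_nhdsWithin_iff]
    constructor
    · have : Tendsto (fun s : ℝ => s ^ η) (𝓝 (0:ℝ)) (𝓝 ((0:ℝ) ^ η)) :=
        (Real.continuousAt_rpow_const 0 η (Or.inr hη.le)).tendsto
      rw [Real.zero_rpow hη.ne'] at this
      exact this.mono_left nhdsWithin_le_nhds
    · filter_upwards [self_mem_nhdsWithin] with s hs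
      exact Real.rpow_pos_of_pos hs η
  have h2 := h1.inv_tendsto_nhdsGT_zero
  apply h2.congr'
  filter_upwards [self_mem_nhdsWithin] with s hs
  simp only [Pi.inv_apply]
  rw [← Real.rpow_neg (le_of_lt hs)]

theorem gamma_eq_sup_vanishing_orders
    (p : ℝ → ℝ) (γ ρ₀ : ℝ)
    (hp1 : ContDiffOn ℝ 1 p (Ioi 0))
    (hpos : ∀ s : ℝ, 0 < s → 0 < p s)
    (hpos' : ∀ s : ℝ, 0 < s → 0 < deriv p s)
    (hγ : 4 / 3 < γ)
    (hlim : Tendsto (fun s => s * deriv p s / p s) (𝓝[>] (0:ℝ)) (𝓝 γ))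
    (hρ₀ : 0 < ρ₀) :
    γ = sSup {a : ℝ | 0 < a ∧ ∃ C : ℝ, ∀ s ∈ Ioc (0:ℝ) ρ₀, s ^ (-a) * p s ≤ C} := by
  set S := {a : ℝ | 0 < a ∧ ∃ C : ℝ, ∀ s ∈ Ioc (0:ℝ) ρ₀, s ^ (-a) * p s ≤ C} with hS
  have hγ0 : 0 < γ := lt_trans (by norm_num) hγ
  have hd : ∀ x : ℝ, 0 < x → DifferentiableAt ℝ p x := by
    intro x hx
    exact (hp1.contDiffAt (Ioi_mem_nhds hx)).differentiableAt one_ne_zero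
  -- Every a with 0 < a < γ belongs to S
  have hmem : ∀ a : ℝ, 0 < a → a < γ → a ∈ S := by
    intro a ha0 haγ
    have hev : ∀ᶠ s in 𝓝[>] (0:ℝ), a < s * deriv p s / p s :=
      hlim.eventually (eventually_gt_nhds haγ)
    obtain ⟨u, hu, hsub⟩ := mem_nhdsGT_iff_exists_Ioc_subset.mp hev
    set δ := min u ρ₀ with hδdef
    have hδ0 : 0 < δ := lt_min hu hρ₀
    have hδρ : δ ≤ ρ₀ := min_le_right _ _
    have hlt : ∀ s ∈ Ioc (0:ℝ) δ, a < s * deriv p s / p s := by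
      intro s hs
      exact hsub ⟨hs.1, le_trans hs.2 (min_le_left _ _)⟩
    have hbd := aux_mono p a δ hδ0 hd hpos hlt
    -- bound p on [δ, ρ₀]
    have hcont : ContinuousOn p (Icc δ ρ₀) := fun x hx =>
      (hd x (lt_of_lt_of_le hδ0 hx.1)).continuousAt.continuousWithinAt
    obtain ⟨M, hM⟩ := (isCompact_Icc.image_of_continuousOn hcont).bddAbove
    refine ⟨ha0, max (p δ * δ ^ (-a)) (δ ^ (-a) * M), ?_⟩
    intro s hs
    by_cases hsδ : s ≤ δ
    · calc s ^ (-a) * p s = p s * s ^ (-a) := mul_comm _ _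
        _ ≤ p δ * δ ^ (-a) := hbd s ⟨hs.1, hsδ⟩
        _ ≤ _ := le_max_left _ _
    · push_neg at hsδ
      have hsIcc : s ∈ Icc δ ρ₀ := ⟨hsδ.le, hs.2⟩
      have hpM : p s ≤ M := hM ⟨s, hsIcc, rfl⟩
      have hrw : s ^ (-a) ≤ δ ^ (-a) :=
        Real.rpow_le_rpow_of_nonpos hδ0 hsδ.le (neg_nonpos.mpr ha0.le)
      calc s ^ (-a) * p s ≤ δ ^ (-a) * M :=
            mul_le_mul hrw hpM (hpos s hs.1).le (Real.rpow_pos_of_pos hδ0 _).le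
        _ ≤ _ := le_max_right _ _
  -- No a with γ < a belongs to S
  have hnmem : ∀ a : ℝ, γ < a → a ∉ S := by
    intro a haγ ⟨ha0, C, hC⟩
    set r := (a + γ) / 2 with hrdef
    have hr1 : γ < r := by rw [hrdef]; linarith
    have hr2 : r < a := by rw [hrdef]; linarith
    have hev : ∀ᶠ s in 𝓝[>] (0:ℝ), s * deriv p s / p s < r :=
      hlim.eventually (eventually_lt_nhds hr1)
    obtain ⟨u, hu, hsub⟩ := mem_nhdsGT_iff_exists_Ioc_subset.mp hev
    set δ := min u ρ₀ with hδdef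
    have hδ0 : 0 < δ := lt_min hu hρ₀
    have hδρ : δ ≤ ρ₀ := min_le_right _ _
    have hlt : ∀ s ∈ Ioc (0:ℝ) δ, s * deriv p s / p s < r := by
      intro s hs
      exact hsub ⟨hs.1, le_trans hs.2 (min_le_left _ _)⟩
    have hbd := aux_anti p r δ hδ0 hd hpos hlt
    set c := p δ * δ ^ (-r) with hcdef
    have hc0 : 0 < c := mul_pos (hpos δ hδ0) (Real.rpow_pos_of_pos hδ0 _)
    -- s ^ (-a) * p s ≥ c * s ^ (r - a) on (0, δ]
    have hlow : ∀ s ∈ Ioc (0:ℝ) δ, c * s ^ (r - a) ≤ s ^ (-a) * p s := by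
      intro s hs
      have hs0 : 0 < s := hs.1
      have hsplit : s ^ (-a) = s ^ (-r) * s ^ (r - a) := by
        rw [← Real.rpow_add hs0]; ring_nf
      rw [hsplit]
      have h1 : c ≤ p s * s ^ (-r) := hbd s hs
      have h2 : 0 < s ^ (r - a) := Real.rpow_pos_of_pos hs0 _
      calc c * s ^ (r - a) ≤ (p s * s ^ (-r)) * s ^ (r - a) :=
            mul_le_mul_of_nonneg_right h1 h2.le
        _ = s ^ (-r) * s ^ (r - a) * p s := by ring
    -- but c * s ^ (r - a) → ∞ as s → 0⁺
    have htop : Tendsto (fun s : ℝ => c * s ^ (r - a)) (𝓝[>] (0:ℝ)) atTop := by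
      have := aux_tendsto_rpow_neg (a - r) (by linarith)
      have heq : ∀ s : ℝ, s ^ (-(a - r)) = s ^ (r - a) := by
        intro s; ring_nf
      simp only [heq] at this
      exact this.const_mul_atTop hc0
    have hevs : ∀ᶠ s in 𝓝[>] (0:ℝ), C < c * s ^ (r - a) :=
      htop.eventually_gt_atTop C
    have hmemδ : Ioc (0:ℝ) δ ∈ 𝓝[>] (0:ℝ) := by
      rw [mem_nhdsGT_iff_exists_Ioc_subset]
      exact ⟨δ, hδ0, subset_refl _⟩
    obtain ⟨s, hsC, hsδ⟩ := (hevs.and (eventually_mem_set.mpr hmemδ)).exists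
    have : s ^ (-a) * p s ≤ C := hC s ⟨hsδ.1, le_trans hsδ.2 hδρ⟩
    have := hlow s hsδ
    linarith
  -- Conclude
  have hne : S.Nonempty := ⟨γ / 2, hmem (γ / 2) (by linarith) (by linarith)⟩
  have hub : ∀ a ∈ S, a ≤ γ := by
    intro a haS
    by_contra h
    push_neg at h
    exact hnmem a h haS
  apply le_antisymm
  · apply le_of_forall_lt
    intro b hb
    set a := (max b (γ / 2) + γ) / 2 with hadef
    have h1 : max b (γ / 2) < γ := max_lt hb (by linarith)
    have h2 : max b (γ / 2) < a := by rw [hadef]; linarith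
    have h3 : a < γ := by rw [hadef]; linarith
    have h4 : 0 < a := lt_of_le_of_lt (le_trans (le_max_right _ _) h2.le) h3 |> fun _ => by
      have : γ / 2 ≤ max b (γ / 2) := le_max_right _ _
      rw [hadef]; linarith
    have hbS : a ∈ S := hmem a h4 h3
    calc b ≤ max b (γ / 2) := le_max_left _ _
      _ < a := h2
      _ ≤ sSup S := le_csSup ⟨γ, hub⟩ hbS
  · exact csSup_le hne hub
end

section
/- Let p : [0,∞) → ℝ be C¹ with p(0) = 0, p(s) > 0 and p'(s) > 0 for s > 0, fix ρ₀ > 0, and assume inf_{0 < s ≤ ρ₀} s p'(s)/p(s) ≥ 4/3. Define i(s) = ∫₀^s p'(τ)/τ dτ. Then for all s ∈ (0, ρ₀], p(s) ≤ s·i(s) ≤ 4·p(s). -/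
open Real Set Filter Topology MeasureTheory

-- helper: interval bounds
lemma epe_key
    (p : ℝ → ℝ) (ρ₀ : ℝ)
    (hp1 : ContDiffOn ℝ 1 p (Ici 0))
    (hpos : ∀ s : ℝ, 0 < s → 0 < p s)
    (hpos' : ∀ s : ℝ, 0 < s → 0 < deriv p s)
    (hinf : ∀ s ∈ Ioc (0:ℝ) ρ₀, (4:ℝ) / 3 ≤ s * deriv p s / p s)
    (s ε : ℝ) (hε : 0 < ε) (hεs : ε ≤ s) (hs : s ≤ ρ₀) :
    IntervalIntegrable (fun τ => deriv p τ / τ) volume ε s ∧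
      (p s - p ε) / s ≤ ∫ τ in ε..s, deriv p τ / τ ∧
      (∫ τ in ε..s, deriv p τ / τ) ≤ 4 * (p s / s) := by
  have hssub : Icc ε s ⊆ Ioi (0:ℝ) := fun τ hτ => lt_of_lt_of_le hε hτ.1
  have hcontd : ContinuousOn (deriv p) (Ioi 0) :=
    (hp1.mono Ioi_subset_Ici_self).continuousOn_deriv_of_isOpen isOpen_Ioi le_rfl
  have hder : ∀ τ ∈ Ioi (0:ℝ), HasDerivAt p (deriv p τ) τ := by
    intro τ hτ
    exact (((hp1.mono Ioi_subset_Ici_self).differentiableOn one_ne_zero).differentiableAt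
      (isOpen_Ioi.mem_nhds hτ)).hasDerivAt
  have hcontp : ContinuousOn p (Ioi 0) := fun τ hτ => ((hder τ hτ).continuousAt).continuousWithinAt
  have hne : ∀ τ ∈ Icc ε s, τ ≠ 0 := fun τ hτ => ne_of_gt (hssub hτ)
  -- integrability of the three integrands
  have hIf : IntervalIntegrable (fun τ => deriv p τ / τ) volume ε s :=
    (((hcontd.mono hssub).div (continuousOn_id) hne)).intervalIntegrable_of_Icc hεs
  have hIg : IntervalIntegrable (fun τ => p τ / τ ^ 2) volume ε s := by
    refine (((hcontp.mono hssub).div ((continuousOn_id).pow 2) ?_)).intervalIntegrable_of_Icc hεs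
    intro τ hτ; exact pow_ne_zero 2 (hne τ hτ)
  have hIp : IntervalIntegrable (deriv p) volume ε s :=
    (hcontd.mono hssub).intervalIntegrable_of_Icc hεs
  -- FTC for p
  have ftc_p : ∫ τ in ε..s, deriv p τ = p s - p ε := by
    apply intervalIntegral.integral_eq_sub_of_hasDerivAt
    · intro τ hτ
      rw [uIcc_of_le hεs] at hτ
      exact hder τ (hssub hτ)
    · exact hIp
  -- FTC for p τ / τ
  have ftc_F : ∫ τ in ε..s, (deriv p τ / τ - p τ / τ ^ 2) = p s / s - p ε / ε := by
    apply intervalIntegral.integral_eq_sub_of_hasDerivAt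
    · intro τ hτ
      rw [uIcc_of_le hεs] at hτ
      have hτ0 : (0:ℝ) < τ := hssub hτ
      have := (hder τ hτ0).div (hasDerivAt_id τ) (ne_of_gt hτ0)
      convert this using 1
      · rfl
      · rfl
      have hτne : τ ≠ 0 := ne_of_gt hτ0
      simp only [id_eq]
      field_simp
    · exact hIf.sub hIg
  have hsplit : (∫ τ in ε..s, deriv p τ / τ) - ∫ τ in ε..s, p τ / τ ^ 2
      = p s / s - p ε / ε := by
    rw [← intervalIntegral.integral_sub hIf hIg]; exact ftc_F
  -- pointwise bound g ≤ (3/4) f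
  have hptw : ∀ τ ∈ Icc ε s, p τ / τ ^ 2 ≤ 3 / 4 * (deriv p τ / τ) := by
    intro τ hτ
    have hτ0 : (0:ℝ) < τ := hssub hτ
    have hpτ : 0 < p τ := hpos τ hτ0
    have h1 : (4:ℝ)/3 ≤ τ * deriv p τ / p τ := hinf τ ⟨hτ0, hτ.2.trans hs⟩
    rw [div_le_div_iff₀ (by norm_num) hpτ] at h1
    rw [div_le_iff₀ (by positivity : (0:ℝ) < τ ^ 2)]
    have heq : 3 / 4 * (deriv p τ / τ) * τ ^ 2 = 3 / 4 * deriv p τ * τ := by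
      field_simp
    rw [heq]; nlinarith
  have hGJ : (∫ τ in ε..s, p τ / τ ^ 2) ≤ 3 / 4 * ∫ τ in ε..s, deriv p τ / τ := by
    rw [← intervalIntegral.integral_const_mul]
    exact intervalIntegral.integral_mono_on hεs hIg (hIf.const_mul _) hptw
  refine ⟨hIf, ?_, ?_⟩
  · -- lower bound
    have hmono : (∫ τ in ε..s, deriv p τ / s) ≤ ∫ τ in ε..s, deriv p τ / τ := by
      apply intervalIntegral.integral_mono_on hεs _ hIf
      · intro τ hτ
        have hτ0 : (0:ℝ) < τ := hssub hτ
        exact div_le_div_of_nonneg_left (le_of_lt (hpos' τ hτ0)) hτ0 hτ.2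
      · exact hIp.div_const s
    calc (p s - p ε) / s = ∫ τ in ε..s, deriv p τ / s := by
          rw [intervalIntegral.integral_div, ftc_p]
      _ ≤ _ := hmono
  · -- upper bound
    have hFε : 0 ≤ p ε / ε := le_of_lt (div_pos (hpos ε hε) hε)
    nlinarith [hsplit, hGJ]

theorem enthalpy_pressure_equivalence
    (p : ℝ → ℝ) (ρ₀ : ℝ)
    (hp1 : ContDiffOn ℝ 1 p (Ici 0))
    (hp0 : p 0 = 0)
    (hpos : ∀ s : ℝ, 0 < s → 0 < p s)
    (hpos' : ∀ s : ℝ, 0 < s → 0 < deriv p s)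
    (hρ₀ : 0 < ρ₀)
    (hinf : ∀ s ∈ Ioc (0:ℝ) ρ₀, (4:ℝ) / 3 ≤ s * deriv p s / p s)
    (i : ℝ → ℝ)
    (hi : ∀ s : ℝ, 0 ≤ s → i s = ∫ τ in Ioc (0:ℝ) s, deriv p τ / τ) :
    ∀ s ∈ Ioc (0:ℝ) ρ₀, p s ≤ s * i s ∧ s * i s ≤ 4 * p s := by
  rintro s ⟨hs0, hsρ⟩
  set f : ℝ → ℝ := fun τ => deriv p τ / τ with hf
  set a : ℕ → ℝ := fun n => s / (n + 1) with ha
  have ha_pos : ∀ n, 0 < a n := fun n => div_pos hs0 (by positivity)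
  have ha_le : ∀ n, a n ≤ s := by
    intro n
    rw [ha]
    exact div_le_self hs0.le (le_add_of_nonneg_left (Nat.cast_nonneg n))
  have ha_tendsto : Tendsto a atTop (𝓝 0) := by
    have : Tendsto (fun n : ℕ => 1 / ((n:ℝ) + 1)) atTop (𝓝 0) := tendsto_one_div_add_atTop_nhds_zero_nat
    have h2 : Tendsto (fun n : ℕ => s * (1 / (n + 1))) atTop (𝓝 (s * 0)) :=
      this.const_mul s
    simpa [ha, mul_one_div, div_eq_mul_inv] using h2
  have key := fun n => epe_key p ρ₀ hp1 hpos hpos' hinf s (a n) (ha_pos n) (ha_le n) hsρ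
  -- AECover of restrict (Ioc 0 s) by Ioc (a n) s
  have hφ : AECover (volume.restrict (Ioc (0:ℝ) s)) atTop (fun n => Ioc (a n) s) :=
    MeasureTheory.aecover_Ioc_of_Ioc ha_tendsto tendsto_const_nhds
  have hrr : ∀ n, (volume.restrict (Ioc (0:ℝ) s)).restrict (Ioc (a n) s)
      = volume.restrict (Ioc (a n) s) := by
    intro n
    rw [Measure.restrict_restrict measurableSet_Ioc]
    congr 1
    rw [inter_eq_left]
    exact Ioc_subset_Ioc (ha_pos n).le le_rfl
  have hIoc : ∀ n, ∫ x in Ioc (a n) s, f x ∂(volume.restrict (Ioc (0:ℝ) s))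
      = ∫ τ in (a n)..s, f τ := by
    intro n
    rw [hrr n, intervalIntegral.integral_of_le (ha_le n)]
  have hfi : ∀ n, IntegrableOn f (Ioc (a n) s) (volume.restrict (Ioc (0:ℝ) s)) := by
    intro n
    rw [IntegrableOn, hrr n]
    exact (key n).1.1
  have hnn : 0 ≤ᵐ[volume.restrict (Ioc (0:ℝ) s)] f := by
    filter_upwards [ae_restrict_mem measurableSet_Ioc] with τ hτ
    exact div_nonneg (hpos' τ hτ.1).le hτ.1.le
  have hbdd : ∀ᶠ n in atTop,
      (∫ x in Ioc (a n) s, f x ∂(volume.restrict (Ioc (0:ℝ) s))) ≤ 4 * (p s / s) :=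
    Eventually.of_forall fun n => by rw [hIoc n]; exact (key n).2.2
  have hint : Integrable f (volume.restrict (Ioc (0:ℝ) s)) :=
    hφ.integrable_of_integral_bounded_of_nonneg_ae _ hfi hnn hbdd
  have htend : Tendsto (fun n => ∫ x in Ioc (a n) s, f x ∂(volume.restrict (Ioc (0:ℝ) s)))
      atTop (𝓝 (∫ x, f x ∂(volume.restrict (Ioc (0:ℝ) s)))) :=
    hφ.integral_tendsto_of_countably_generated hint
  have his : i s = ∫ x, f x ∂(volume.restrict (Ioc (0:ℝ) s)) := hi s hs0.le
  rw [← his] at htend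
  have hupper : i s ≤ 4 * (p s / s) :=
    le_of_tendsto' htend fun n => by rw [hIoc n]; exact (key n).2.2
  have hptend : Tendsto (fun n => (p s - p (a n)) / s) atTop (𝓝 (p s / s)) := by
    have hpc : ContinuousWithinAt p (Ici 0) 0 := hp1.continuousOn 0 self_mem_Ici
    have h1 : Tendsto (fun n => p (a n)) atTop (𝓝 0) := by
      rw [← hp0]
      exact hpc.tendsto.comp (tendsto_nhdsWithin_iff.mpr
        ⟨ha_tendsto, Eventually.of_forall fun n => (ha_pos n).le⟩)
    have h2 : Tendsto (fun n => (p s - p (a n)) / s) atTop (𝓝 ((p s - 0) / s)) :=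
      (tendsto_const_nhds.sub h1).div_const s
    simpa using h2
  have hlower : p s / s ≤ i s := by
    refine le_of_tendsto_of_tendsto' hptend htend fun n => ?_
    rw [hIoc n]; exact (key n).2.1
  constructor
  · calc p s = s * (p s / s) := by field_simp
      _ ≤ s * i s := by exact mul_le_mul_of_nonneg_left hlower hs0.le
  · calc s * i s ≤ s * (4 * (p s / s)) := mul_le_mul_of_nonneg_left hupper hs0.le
      _ = 4 * p s := by field_simp
end

section
/- Let k > 1, l > 0, and let f : (0,l) → ℝ be continuously differentiable with ∫₀^l x^k (f(x)² + f'(x)²) dx < ∞. Then there exists a constant C depending only on k and l such that ∫₀^l x^{k−2} f(x)² dx ≤ C ∫₀^l x^k (f(x)² + f'(x)²) dx. -/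
open Real Set Filter Topology MeasureTheory

theorem aux_amgm (c a b u v : ℝ) (hc : 0 < c) :
    -(c⁻¹ * (a*b) * (2 * u * v)) ≤ 1/2 * (a*a*(u*u)) + 2/c^2 * (b*b*(v*v)) := by
  have h : 0 ≤ (c*(a*u) + 2*(b*v))^2 := sq_nonneg _
  have hc2 : (0:ℝ) < c^2 := by positivity
  rw [← mul_le_mul_iff_right₀ hc2]
  have e : c^2 * -(c⁻¹ * (a*b) * (2*u*v)) = -(2*c*((a*u)*(b*v))) := by
    field_simp
  have e2 : c^2 * (1/2 * (a*a*(u*u)) + 2/c^2 * (b*b*(v*v)))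
      = 1/2*c^2*((a*u)*(a*u)) + 2*((b*v)*(b*v)) := by
    field_simp
  rw [e, e2]
  nlinarith [h]

set_option maxHeartbeats 1000000 in
theorem hardy_inequality_weighted
    (k l : ℝ) (hk : 1 < k) (hl : 0 < l) :
    ∃ C : ℝ, 0 < C ∧ ∀ f : ℝ → ℝ,
      (∀ x ∈ Ioo (0:ℝ) l, DifferentiableAt ℝ f x) →
      ContinuousOn (deriv f) (Ioo (0:ℝ) l) →
      IntegrableOn (fun x => x ^ k * ((f x) ^ 2 + (deriv f x) ^ 2)) (Ioo (0:ℝ) l) →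
      ∫ x in Ioo (0:ℝ) l, x ^ (k - 2) * (f x) ^ 2 ≤
        C * ∫ x in Ioo (0:ℝ) l, x ^ k * ((f x) ^ 2 + (deriv f x) ^ 2) := by
  have hk1 : (0:ℝ) < k - 1 := by linarith
  set m : ℝ := l / 2 with hmdef
  have hm0 : 0 < m := by positivity
  have hml : m < l := by rw [hmdef]; linarith
  set m2 : ℝ := m + l / 4 with hm2def
  have hm2l : m2 < l := by rw [hm2def, hmdef]; linarith
  have hmm2 : m < m2 := by rw [hm2def]; linarith
  set cf : ℝ := (m ^ k)⁻¹ * (1 + 4 / l) with hcfdef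
  refine ⟨2 * (k-1)⁻¹ * m ^ (k-1) * cf + 4 / (k-1)^2 + (m^2)⁻¹, by positivity, ?_⟩
  intro f hf hfc hInt
  set S : ℝ → ℝ := fun x => x ^ k * ((f x) ^ 2 + (deriv f x) ^ 2) with hSdef
  set M : ℝ := ∫ x in Ioo (0:ℝ) l, S x with hMdef
  set P : ℝ → ℝ := fun x => x ^ (k-2) * (f x) ^ 2 with hPdef
  have hSnn : ∀ x ∈ Ioo (0:ℝ) l, 0 ≤ S x := by
    intro x hx
    have : (0:ℝ) < x := hx.1
    positivity
  have hMnn : 0 ≤ M := setIntegral_nonneg measurableSet_Ioo hSnn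
  have hfcont : ContinuousOn f (Ioo (0:ℝ) l) :=
    fun x hx => (hf x hx).continuousAt.continuousWithinAt
  -- continuity lemmas
  have hrpow : ∀ p : ℝ, ContinuousOn (fun x : ℝ => x ^ p) (Ioo (0:ℝ) l) := by
    intro p
    exact fun x hx => (Real.continuousAt_rpow_const x p (Or.inl hx.1.ne')).continuousWithinAt
  have hPcont : ContinuousOn P (Ioo (0:ℝ) l) := (hrpow (k-2)).mul (hfcont.pow 2)
  have hScont : ContinuousOn S (Ioo (0:ℝ) l) :=
    (hrpow k).mul ((hfcont.pow 2).add (hfc.pow 2))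
  have hRcont : ContinuousOn (fun x => x ^ k * (deriv f x)^2) (Ioo (0:ℝ) l) :=
    (hrpow k).mul (hfc.pow 2)
  have hQcont : ContinuousOn (fun x => (k-1)⁻¹ * x ^ (k-1) * (2 * f x * deriv f x))
      (Ioo (0:ℝ) l) := by
    exact (((hrpow (k-1)).const_smul ((k-1)⁻¹)).mul
      (((hfcont.const_smul (2:ℝ)).mul hfc)))
  -- subset facts
  have hIocm : Ioc (0:ℝ) m ⊆ Ioo (0:ℝ) l := fun x hx => ⟨hx.1, lt_of_le_of_lt hx.2 hml⟩
  have hIoom : Ioo m l ⊆ Ioo (0:ℝ) l := fun x hx => ⟨lt_trans hm0 hx.1, hx.2⟩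
  -- bound sub-integrals of S by M
  have hSsub : ∀ s : Set ℝ, s ⊆ Ioo (0:ℝ) l → ∫ x in s, S x ≤ M := by
    intro s hs
    exact setIntegral_mono_set hInt
      ((ae_restrict_iff' measurableSet_Ioo).2 (ae_of_all _ hSnn)) hs.eventuallyLE
  have hd2 : ∀ x ∈ Ioo (0:ℝ) l, HasDerivAt (fun y => (f y)^2) (2 * f x * deriv f x) x := by
    intro x hx
    have := ((hf x hx).hasDerivAt).pow 2
    refine this.congr_deriv ?_
    norm_num
  have hfm : f m ^ 2 ≤ cf * M := by
    have hmk : (0:ℝ) < m ^ k := by positivity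
    have hkey : ∀ y ∈ Ioc m m2, f m ^ 2 - (m^k)⁻¹ * M ≤ f y ^ 2 := by
      intro y hy
      have hIy : Icc m y ⊆ Ioo (0:ℝ) l := fun x hx =>
        ⟨lt_of_lt_of_le hm0 hx.1, lt_of_le_of_lt (le_trans hx.2 hy.2) hm2l⟩
      have hu : uIcc m y = Icc m y := uIcc_of_le hy.1.le
      have hcont2 : ContinuousOn (fun x => 2 * f x * deriv f x) (Icc m y) :=
        ((hfcont.const_smul (2:ℝ)).mul hfc).mono hIy
      have hFTC : ∫ x in m..y, 2 * f x * deriv f x = f y ^ 2 - f m ^ 2 :=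
        intervalIntegral.integral_eq_sub_of_hasDerivAt
          (fun x hx => hd2 x (hIy (hu ▸ hx)))
          (hcont2.intervalIntegrable_of_Icc hy.1.le)
      have hmono : ∫ x in m..y, -(2 * f x * deriv f x) ≤ ∫ x in m..y, (m^k)⁻¹ * S x := by
        refine intervalIntegral.integral_mono_on hy.1.le
          (hcont2.neg.intervalIntegrable_of_Icc hy.1.le)
          ((((hScont.mono hIy).const_smul ((m^k)⁻¹)).intervalIntegrable_of_Icc hy.1.le)) ?_
        intro x hx
        have hxm : m ≤ x := hx.1
        have h1 : m ^ k ≤ x ^ k := Real.rpow_le_rpow hm0.le hxm (by linarith)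
        have h2 : (1:ℝ) ≤ (m^k)⁻¹ * x ^ k := by
          rw [inv_mul_eq_div, le_div_iff₀ hmk]; simpa using h1
        have hsum : (0:ℝ) ≤ f x ^ 2 + deriv f x ^ 2 := by positivity
        show -(2 * f x * deriv f x) ≤ (m^k)⁻¹ * (x ^ k * (f x ^ 2 + deriv f x ^ 2))
        nlinarith [sq_nonneg (f x + deriv f x), h2, hsum]
      have hIocy : Ioc m y ⊆ Ioo (0:ℝ) l := fun x hx =>
        ⟨lt_trans hm0 hx.1, lt_of_le_of_lt (le_trans hx.2 hy.2) hm2l⟩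
      have h5 : ∫ x in m..y, (m^k)⁻¹ * S x ≤ (m^k)⁻¹ * M := by
        rw [intervalIntegral.integral_const_mul, intervalIntegral.integral_of_le hy.1.le]
        exact mul_le_mul_of_nonneg_left (hSsub _ hIocy) (by positivity)
      have h6 : ∫ x in m..y, -(2 * f x * deriv f x) = -(f y ^ 2 - f m ^ 2) := by
        rw [intervalIntegral.integral_neg, hFTC]
      linarith [hmono, h5, h6.symm.le, h6.le]
    have hIocm2 : Ioc m m2 ⊆ Ioo (0:ℝ) l := fun x hx =>
      ⟨lt_trans hm0 hx.1, lt_of_le_of_lt hx.2 hm2l⟩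
    have hkey2 : ∀ y ∈ Ioc m m2, f y ^ 2 ≤ (m^k)⁻¹ * S y := by
      intro y hy
      have h1 : m ^ k ≤ y ^ k := Real.rpow_le_rpow hm0.le hy.1.le (by linarith)
      have h2 : (1:ℝ) ≤ (m^k)⁻¹ * y ^ k := by
        rw [inv_mul_eq_div, le_div_iff₀ hmk]; simpa using h1
      have hsum : (0:ℝ) ≤ f y ^ 2 + deriv f y ^ 2 := by positivity
      show f y ^ 2 ≤ (m^k)⁻¹ * (y ^ k * (f y ^ 2 + deriv f y ^ 2))
      nlinarith [h2, hsum, sq_nonneg (deriv f y), sq_nonneg (f y)]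
    have hintS : IntegrableOn (fun y => (m^k)⁻¹ * S y) (Ioc m m2) :=
      (hInt.mono_set hIocm2).const_mul _
    have hmono2 : ∫ _y in Ioc m m2, (f m ^ 2 - (m^k)⁻¹ * M) ≤ ∫ y in Ioc m m2, (m^k)⁻¹ * S y := by
      refine setIntegral_mono_on ?_ hintS measurableSet_Ioc
        (fun y hy => le_trans (hkey y hy) (hkey2 y hy))
      exact integrableOn_const (by rw [Real.volume_Ioc]; exact ENNReal.ofReal_ne_top)
    have hconst : ∫ _y in Ioc m m2, (f m ^ 2 - (m^k)⁻¹ * M) = (l/4) * (f m ^ 2 - (m^k)⁻¹ * M) := by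
      rw [setIntegral_const, Real.volume_real_Ioc_of_le (by linarith), smul_eq_mul]
      congr 1
      rw [hm2def]; ring
    have hS2 : ∫ y in Ioc m m2, (m^k)⁻¹ * S y ≤ (m^k)⁻¹ * M := by
      rw [MeasureTheory.integral_const_mul]
      exact mul_le_mul_of_nonneg_left (hSsub _ hIocm2) (by positivity)
    have hfinal : (l/4) * (f m ^ 2 - (m^k)⁻¹ * M) ≤ (m^k)⁻¹ * M := by
      rw [← hconst]; linarith [hmono2, hS2]
    have h7 : f m ^ 2 - (m^k)⁻¹ * M ≤ ((m^k)⁻¹ * M) / (l/4) := by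
      rw [le_div_iff₀ (by positivity : (0:ℝ) < l/4)]
      linarith [hfinal]
    have h8 : ((m^k)⁻¹ * M) / (l/4) = 4/l * ((m^k)⁻¹ * M) := by
      field_simp
    have h9 : cf * M = (m^k)⁻¹ * M + 4/l * ((m^k)⁻¹ * M) := by
      rw [hcfdef]; field_simp
    linarith [h7, h8.le, h8.symm.le, h9.le, h9.symm.le]
  -- derivative of G
  set G : ℝ → ℝ := fun x => (k-1)⁻¹ * x ^ (k-1) * (f x)^2 with hGdef
  have hG : ∀ x ∈ Ioo (0:ℝ) l, HasDerivAt G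
      (P x + (k-1)⁻¹ * x ^ (k-1) * (2 * f x * deriv f x)) x := by
    intro x hx
    have h1 : HasDerivAt (fun y : ℝ => y ^ (k-1)) ((k-1) * x ^ (k-1-1)) x :=
      Real.hasDerivAt_rpow_const (Or.inl hx.1.ne')
    have h3 := (h1.const_mul ((k-1)⁻¹)).mul (hd2 x hx)
    refine h3.congr_deriv ?_
    symm
    have he : k - 1 - 1 = k - 2 := by ring
    rw [hPdef, he]
    field_simp
  by_cases hL : IntegrableOn P (Ioo (0:ℝ) l)
  · -- main case
    have key1 : ∫ x in Ioc (0:ℝ) m, P x ≤ 2 * (G m) + 4/(k-1)^2 * M := by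
      have hbound : ∀ a : ℝ, a ∈ Ioo (0:ℝ) m → ∫ x in Ioc a m, P x ≤ 2 * (G m) + 4/(k-1)^2 * M := by
        intro a ha
        have ham : a ≤ m := ha.2.le
        have hIa : Icc a m ⊆ Ioo (0:ℝ) l := fun x hx =>
          ⟨lt_of_lt_of_le ha.1 hx.1, lt_of_le_of_lt hx.2 hml⟩
        have hIoca : Ioc a m ⊆ Ioo (0:ℝ) l := fun x hx =>
          ⟨lt_trans ha.1 hx.1, lt_of_le_of_lt hx.2 hml⟩
        have hu : uIcc a m = Icc a m := uIcc_of_le ham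
        set Q : ℝ → ℝ := fun x => (k-1)⁻¹ * x ^ (k-1) * (2 * f x * deriv f x) with hQdef2
        have hPint : IntervalIntegrable P volume a m :=
          (hPcont.mono hIa).intervalIntegrable_of_Icc ham
        have hQint : IntervalIntegrable Q volume a m :=
          (hQcont.mono hIa).intervalIntegrable_of_Icc ham
        have hRint : IntervalIntegrable (fun x => x ^ k * deriv f x ^ 2) volume a m :=
          (hRcont.mono hIa).intervalIntegrable_of_Icc ham
        have hRint2 : IntervalIntegrable
            (fun x => 1/2 * P x + 2/(k-1)^2 * (x ^ k * deriv f x ^ 2)) volume a m :=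
          (hPint.const_mul _).add (hRint.const_mul _)
        have hFTC : ∫ x in a..m, (P x + Q x) = G m - G a :=
          intervalIntegral.integral_eq_sub_of_hasDerivAt
            (fun x hx => hG x (hIa (hu ▸ hx))) (hPint.add hQint)
        have hsplit2 : ∫ x in a..m, (P x + Q x) = (∫ x in a..m, P x) + ∫ x in a..m, Q x :=
          intervalIntegral.integral_add hPint hQint
        have hGa : 0 ≤ G a := by
          rw [hGdef]
          have : (0:ℝ) ≤ a ^ (k-1) := Real.rpow_nonneg ha.1.le _
          positivity
        have hptq : ∀ x ∈ Icc a m, -Q x ≤ 1/2 * P x + 2/(k-1)^2 * (x ^ k * deriv f x ^ 2) := by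
          intro x hx
          have hx0 : 0 < x := lt_of_lt_of_le ha.1 hx.1
          have hA : x ^ ((k-2)/2) * x ^ ((k-2)/2) = x ^ (k-2) := by
            rw [← Real.rpow_add hx0]; congr 1; ring
          have hB : x ^ (k/2) * x ^ (k/2) = x ^ k := by
            rw [← Real.rpow_add hx0]; congr 1; ring
          have hAB : x ^ ((k-2)/2) * x ^ (k/2) = x ^ (k-1) := by
            rw [← Real.rpow_add hx0]; congr 1; ring
          have haux := aux_amgm (k-1) (x ^ ((k-2)/2)) (x ^ (k/2)) (f x) (deriv f x) hk1
          rw [hQdef2, hPdef]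
          dsimp only
          rw [← hA, ← hB, ← hAB]
          nlinarith [haux]
        have hQbound : ∫ x in a..m, -Q x ≤
            1/2 * (∫ x in a..m, P x) + 2/(k-1)^2 * ∫ x in a..m, x ^ k * deriv f x ^ 2 := by
          calc ∫ x in a..m, -Q x
              ≤ ∫ x in a..m, (1/2 * P x + 2/(k-1)^2 * (x ^ k * deriv f x ^ 2)) :=
                intervalIntegral.integral_mono_on ham hQint.neg hRint2 hptq
            _ = 1/2 * (∫ x in a..m, P x) + 2/(k-1)^2 * ∫ x in a..m, x ^ k * deriv f x ^ 2 := by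
                rw [intervalIntegral.integral_add (hPint.const_mul _) (hRint.const_mul _),
                  intervalIntegral.integral_const_mul, intervalIntegral.integral_const_mul]
        have hQeq : ∫ x in a..m, -Q x = -(∫ x in a..m, Q x) := intervalIntegral.integral_neg
        have hR_le_M : ∫ x in a..m, x ^ k * deriv f x ^ 2 ≤ M := by
          rw [intervalIntegral.integral_of_le ham]
          have hptR : ∀ x ∈ Ioc a m, x ^ k * deriv f x ^ 2 ≤ S x := by
            intro x hx
            have hx0 : 0 < x := lt_trans ha.1 hx.1
            show x ^ k * deriv f x ^ 2 ≤ x ^ k * (f x ^ 2 + deriv f x ^ 2)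
            have : deriv f x ^ 2 ≤ f x ^ 2 + deriv f x ^ 2 := by nlinarith [sq_nonneg (f x)]
            exact mul_le_mul_of_nonneg_left this (Real.rpow_nonneg hx0.le k)
          have hRio : IntegrableOn (fun x => x ^ k * deriv f x ^ 2) (Ioc a m) := hRint.1
          calc ∫ x in Ioc a m, x ^ k * deriv f x ^ 2 ≤ ∫ x in Ioc a m, S x :=
                setIntegral_mono_on hRio (hInt.mono_set hIoca) measurableSet_Ioc hptR
            _ ≤ M := hSsub _ hIoca
        have hcM : 2/(k-1)^2 * (∫ x in a..m, x ^ k * deriv f x ^ 2) ≤ 2/(k-1)^2 * M :=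
          mul_le_mul_of_nonneg_left hR_le_M (by positivity)
        rw [← intervalIntegral.integral_of_le ham]
        have e1 : (∫ x in a..m, P x) = G m - G a - ∫ x in a..m, Q x := by
          linarith [hFTC, hsplit2]
        have e2 : -(∫ x in a..m, Q x) ≤
            1/2 * (∫ x in a..m, P x) + 2/(k-1)^2 * M := by
          rw [← hQeq]; linarith [hQbound, hcM]
        have e3 : (∫ x in a..m, P x) ≤ G m + 1/2 * (∫ x in a..m, P x) + 2/(k-1)^2 * M := by
          linarith [e1, e2, hGa]
        have he : 4/(k-1)^2*M = 2*(2/(k-1)^2*M) := by ring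
        linarith [e3, he.le, he.symm.le]
      have hmono : Monotone (fun n : ℕ => Ioc (m / (n+2) : ℝ) m) := by
        intro i j hij
        apply Ioc_subset_Ioc_left
        apply div_le_div_of_nonneg_left hm0.le (by positivity)
        have : (i:ℝ) ≤ j := Nat.cast_le.2 hij
        linarith
      have hun : (⋃ n : ℕ, Ioc (m / (n+2) : ℝ) m) = Ioc (0:ℝ) m := by
        apply Subset.antisymm
        · exact iUnion_subset fun n => Ioc_subset_Ioc_left (le_of_lt (by positivity))
        · intro x hx
          obtain ⟨n, hn⟩ := exists_nat_gt (m / x)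
          refine mem_iUnion.2 ⟨n, ?_, hx.2⟩
          have hn2 : m / x < (n:ℝ) + 2 := by linarith [hn]
          rw [div_lt_iff₀ hx.1] at hn2
          rw [div_lt_iff₀ (by positivity : (0:ℝ) < (n:ℝ) + 2)]
          linarith [hn2]
      have htend := tendsto_setIntegral_of_monotone (fun n : ℕ => measurableSet_Ioc) hmono
        (by rw [hun]; exact hL.mono_set hIocm)
      rw [hun] at htend
      refine le_of_tendsto' htend (fun n => hbound _ ⟨by positivity, ?_⟩)
      apply div_lt_self hm0
      have : (0:ℝ) ≤ (n:ℝ) := Nat.cast_nonneg n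
      linarith
    have key2 : ∫ x in Ioo m l, P x ≤ (m^2)⁻¹ * M := by
      have hpt : ∀ x ∈ Ioo m l, P x ≤ (m^2)⁻¹ * S x := by
        intro x hx
        have hx0 : 0 < x := lt_trans hm0 hx.1
        have h1 : x ^ (k-2) = x ^ k / x ^ (2:ℝ) := Real.rpow_sub hx0 k 2
        have h2 : x ^ ((2:ℝ)) = x ^ (2:ℕ) := Real.rpow_two x
        have h3 : x ^ k / x ^ (2:ℕ) ≤ x ^ k / m ^ (2:ℕ) := by
          apply div_le_div_of_nonneg_left (Real.rpow_nonneg hx0.le k) (by positivity)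
          exact pow_le_pow_left₀ hm0.le hx.1.le 2
        have h4 : x ^ (k-2) ≤ x ^ k / m ^ 2 := by
          rw [h1]
          calc x ^ k / x ^ (2:ℝ) = x ^ k / x ^ (2:ℕ) := by rw [h2]
            _ ≤ x ^ k / m ^ 2 := h3
        have hf2 : f x ^ 2 ≤ f x ^ 2 + deriv f x ^ 2 := by nlinarith [sq_nonneg (deriv f x)]
        show x ^ (k-2) * f x ^ 2 ≤ (m^2)⁻¹ * (x ^ k * (f x ^ 2 + deriv f x ^ 2))
        calc x ^ (k-2) * f x ^ 2 ≤ (x ^ k / m ^ 2) * f x ^ 2 :=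
              mul_le_mul_of_nonneg_right h4 (sq_nonneg _)
          _ = (m^2)⁻¹ * (x ^ k * f x ^ 2) := by ring
          _ ≤ (m^2)⁻¹ * (x ^ k * (f x ^ 2 + deriv f x ^ 2)) := by
              have : x ^ k * f x ^ 2 ≤ x ^ k * (f x ^ 2 + deriv f x ^ 2) :=
                mul_le_mul_of_nonneg_left hf2 (Real.rpow_nonneg hx0.le k)
              exact mul_le_mul_of_nonneg_left this (by positivity)
      calc ∫ x in Ioo m l, P x ≤ ∫ x in Ioo m l, (m^2)⁻¹ * S x :=
            setIntegral_mono_on (hL.mono_set hIoom) ((hInt.mono_set hIoom).const_mul _)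
              measurableSet_Ioo hpt
        _ = (m^2)⁻¹ * ∫ x in Ioo m l, S x := MeasureTheory.integral_const_mul _ _
        _ ≤ (m^2)⁻¹ * M := mul_le_mul_of_nonneg_left (hSsub _ hIoom) (by positivity)
    have hsplit : ∫ x in Ioo (0:ℝ) l, P x
        = (∫ x in Ioc (0:ℝ) m, P x) + ∫ x in Ioo m l, P x := by
      rw [← Set.Ioc_union_Ioo_eq_Ioo hm0.le hml]
      refine setIntegral_union ?_ measurableSet_Ioo (hL.mono_set hIocm) (hL.mono_set hIoom)
      rw [Set.disjoint_left]
      rintro x ⟨_, h1⟩ ⟨h2, _⟩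
      linarith
    have hGm : G m ≤ (k-1)⁻¹ * m ^ (k-1) * (cf * M) := by
      rw [hGdef]
      have h1 : (0:ℝ) ≤ (k-1)⁻¹ * m ^ (k-1) := by positivity
      calc (k-1)⁻¹ * m ^ (k-1) * (f m)^2 = (k-1)⁻¹ * m ^ (k-1) * (f m ^2) := by ring
        _ ≤ (k-1)⁻¹ * m ^ (k-1) * (cf * M) := by
            exact mul_le_mul_of_nonneg_left hfm h1
    calc ∫ x in Ioo (0:ℝ) l, P x
        = (∫ x in Ioc (0:ℝ) m, P x) + ∫ x in Ioo m l, P x := hsplit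
      _ ≤ (2 * (G m) + 4/(k-1)^2 * M) + (m^2)⁻¹ * M := add_le_add key1 key2
      _ ≤ (2 * ((k-1)⁻¹ * m ^ (k-1) * (cf * M)) + 4/(k-1)^2 * M) + (m^2)⁻¹ * M := by
          have := hGm; linarith
      _ = (2 * (k-1)⁻¹ * m ^ (k-1) * cf + 4 / (k-1)^2 + (m^2)⁻¹) * M := by ring
  · rw [MeasureTheory.integral_undef hL]
    have hC : (0:ℝ) ≤ 2 * (k-1)⁻¹ * m ^ (k-1) * cf + 4 / (k-1)^2 + (m^2)⁻¹ := by positivity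
    exact mul_nonneg hC hMnn
end

section
/- Let ρ̄ : [0,R̄] → [0,∞) be continuous with ρ̄ > 0 on [0,R̄), ρ̄(R̄)=0, ρ̄ strictly decreasing, satisfying the hydrostatic equation d/dx i(ρ̄(x)) = −x φ(x) on (0,R̄), where φ(x) = (4πG/x³)∫₀^x s² ρ̄(s) ds, i is the enthalpy with i(0)=0, and M = 4π∫₀^{R̄} s²ρ̄(s)ds. Then for all x ∈ (0,R̄): (MG/(2R̄²))·(R̄ − x) ≤ i(ρ̄(x)) ≤ (4πG ρ̄(0) R̄/3)·(R̄ − x). -/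
open Real Set Filter Topology intervalIntegral

theorem stationary_enthalpy_equiv_distance
    (R G M : ℝ) (hR : 0 < R) (hG : 0 < G)
    (ρ : ℝ → ℝ)
    (hcont : ContinuousOn ρ (Icc 0 R))
    (hanti : StrictAntiOn ρ (Icc 0 R))
    (hρpos : ∀ x ∈ Ico (0:ℝ) R, 0 < ρ x)
    (hρR : ρ R = 0)
    (i : ℝ → ℝ) (hi0 : i 0 = 0) (hicont : Continuous i)
    (φ : ℝ → ℝ)
    (hφ : ∀ x ∈ Ioc (0:ℝ) R, φ x = (4 * π * G / x ^ 3) * ∫ s in (0:ℝ)..x, s ^ 2 * ρ s)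
    (hM : M = 4 * π * ∫ s in (0:ℝ)..R, s ^ 2 * ρ s)
    (hode : ∀ x ∈ Ioo (0:ℝ) R, HasDerivAt (fun y => i (ρ y)) (-(x * φ x)) x) :
    ∀ x ∈ Ioo (0:ℝ) R,
      M * G / (2 * R ^ 2) * (R - x) ≤ i (ρ x) ∧
      i (ρ x) ≤ 4 * π * G * ρ 0 * R / 3 * (R - x) := by
  have hπ : (0:ℝ) < π := Real.pi_pos
  set m : ℝ → ℝ := fun s => ∫ t in (0:ℝ)..s, t ^ 2 * ρ t with hmdef
  have hρ0 : 0 < ρ 0 := hρpos 0 ⟨le_refl 0, hR⟩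
  -- monotone (non-strict)
  have hmono : ∀ a ∈ Icc (0:ℝ) R, ∀ b ∈ Icc (0:ℝ) R, a ≤ b → ρ b ≤ ρ a := by
    intro a ha b hb hab
    rcases eq_or_lt_of_le hab with h | h
    · simp [h]
    · exact (hanti ha hb h).le
  have hcont2 : ContinuousOn (fun t => t ^ 2 * ρ t) (Icc 0 R) :=
    (continuous_pow 2).continuousOn.mul hcont
  have hInt : ∀ a b, a ∈ Icc (0:ℝ) R → b ∈ Icc (0:ℝ) R →
      IntervalIntegrable (fun t => t ^ 2 * ρ t) MeasureTheory.volume a b := by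
    intro a b ha hb
    exact (hcont2.mono (uIcc_subset_Icc ha hb)).intervalIntegrable
  -- lower bound on m s
  have hm_lb : ∀ s ∈ Icc (0:ℝ) R, ρ s * s ^ 3 / 3 ≤ m s := by
    intro s hs
    have h1 : (∫ t in (0:ℝ)..s, t ^ 2 * ρ s) ≤ m s := by
      apply intervalIntegral.integral_mono_on hs.1
      · exact (((continuous_pow 2).mul continuous_const).continuousOn).intervalIntegrable
      · exact hInt 0 s ⟨le_refl 0, hR.le⟩ hs
      · intro t ht
        have hts : ρ s ≤ ρ t := hmono t ⟨ht.1, ht.2.trans hs.2⟩ s hs ht.2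
        nlinarith [sq_nonneg t]
    have h2 : (∫ t in (0:ℝ)..s, t ^ 2 * ρ s) = ρ s * s ^ 3 / 3 := by
      rw [intervalIntegral.integral_mul_const, integral_pow]
      ring
    linarith
  have hm_ub : ∀ s ∈ Icc (0:ℝ) R, m s ≤ ρ 0 * s ^ 3 / 3 := by
    intro s hs
    have h1 : m s ≤ ∫ t in (0:ℝ)..s, t ^ 2 * ρ 0 := by
      apply intervalIntegral.integral_mono_on hs.1
      · exact hInt 0 s ⟨le_refl 0, hR.le⟩ hs
      · exact (((continuous_pow 2).mul continuous_const).continuousOn).intervalIntegrable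
      · intro t ht
        have : ρ t ≤ ρ 0 := hmono 0 ⟨le_refl 0, hR.le⟩ t ⟨ht.1, ht.2.trans hs.2⟩ ht.1
        nlinarith [sq_nonneg t]
    have h2 : (∫ t in (0:ℝ)..s, t ^ 2 * ρ 0) = ρ 0 * s ^ 3 / 3 := by
      rw [intervalIntegral.integral_mul_const, integral_pow]
      ring
    linarith
  have hm_tail : ∀ s ∈ Icc (0:ℝ) R, m R - m s ≤ ρ s * (R ^ 3 - s ^ 3) / 3 := by
    intro s hs
    have hadd : m s + (∫ t in s..R, t ^ 2 * ρ t) = m R :=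
      intervalIntegral.integral_add_adjacent_intervals
        (hInt 0 s ⟨le_refl 0, hR.le⟩ hs) (hInt s R hs ⟨hR.le, le_refl R⟩)
    have h1 : (∫ t in s..R, t ^ 2 * ρ t) ≤ ∫ t in s..R, t ^ 2 * ρ s := by
      apply intervalIntegral.integral_mono_on hs.2
      · exact hInt s R hs ⟨hR.le, le_refl R⟩
      · exact (((continuous_pow 2).mul continuous_const).continuousOn).intervalIntegrable
      · intro t ht
        have : ρ t ≤ ρ s := hmono s hs t ⟨hs.1.trans ht.1, ht.2⟩ ht.1
        nlinarith [sq_nonneg t]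
    have h2 : (∫ t in s..R, t ^ 2 * ρ s) = ρ s * (R ^ 3 - s ^ 3) / 3 := by
      rw [intervalIntegral.integral_mul_const, integral_pow]
      ring
    linarith
  have hmR_nn : 0 ≤ m R := by
    have h := hm_lb R ⟨hR.le, le_refl R⟩
    rw [hρR] at h; linarith
  have hMval : M = 4 * π * m R := hM
  -- key: m R * s^3 ≤ m s * R^3 for s ∈ (0, R]
  have hm_key : ∀ s ∈ Icc (0:ℝ) R, 0 < s → m R * s ^ 3 ≤ m s * R ^ 3 := by
    intro s hs hspos
    have h1 := hm_lb s hs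
    have h2 := hm_tail s hs
    have hs3 : 0 < s ^ 3 := by positivity
    have hR3 : s ^ 3 ≤ R ^ 3 := pow_le_pow_left₀ hs.1 hs.2 3
    nlinarith [mul_le_mul_of_nonneg_right h2 hs3.le]
  -- continuity of m
  have hmcont : ContinuousOn m (Icc 0 R) := by
    have : MeasureTheory.IntegrableOn (fun t => t ^ 2 * ρ t) (uIcc 0 R) MeasureTheory.volume := by
      rw [uIcc_of_le hR.le]
      exact (hInt 0 R ⟨le_refl 0, hR.le⟩ ⟨hR.le, le_refl R⟩).1.congr_set_ae
        (MeasureTheory.Ioc_ae_eq_Icc).symm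
    simpa [uIcc_of_le hR.le] using intervalIntegral.continuousOn_primitive_interval this
  intro x hx
  obtain ⟨hx0, hxR⟩ := hx
  -- φ on [x, R] equals a continuous expression
  have hφcont : ContinuousOn (fun s => -(s * φ s)) (Icc x R) := by
    have hsub : Icc x R ⊆ Icc 0 R := Icc_subset_Icc hx0.le le_rfl
    have : ContinuousOn (fun s => -(s * ((4 * π * G / s ^ 3) * m s))) (Icc x R) := by
      apply ContinuousOn.neg
      apply continuousOn_id.mul
      apply ContinuousOn.mul
      · apply ContinuousOn.div continuousOn_const (continuous_pow 3).continuousOn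
        intro s hs
        have : 0 < s := lt_of_lt_of_le hx0 hs.1
        positivity
      · exact hmcont.mono hsub
    apply this.congr
    intro s hs
    have hsIoc : s ∈ Ioc (0:ℝ) R := ⟨lt_of_lt_of_le hx0 hs.1, hs.2⟩
    simp only [hφ s hsIoc]
    rfl
  have hφint : IntervalIntegrable (fun s => -(s * φ s)) MeasureTheory.volume x R := by
    exact (hφcont.mono (by rw [uIcc_of_le hxR.le])).intervalIntegrable
  -- FTC
  have hF : (∫ s in x..R, -(s * φ s)) = i (ρ R) - i (ρ x) := by
    apply intervalIntegral.integral_eq_sub_of_hasDerivAt_of_le hxR.le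
    · exact hicont.comp_continuousOn (hcont.mono (Icc_subset_Icc hx0.le le_rfl))
    · intro s hs
      exact hode s ⟨lt_trans hx0 hs.1, hs.2⟩
    · exact hφint
  have hFx : i (ρ x) = ∫ s in x..R, s * φ s := by
    rw [intervalIntegral.integral_neg] at hF
    rw [hρR, hi0] at hF
    linarith
  -- pointwise bounds on s * φ s for s ∈ [x, R]
  have hpt : ∀ s ∈ Icc x R,
      M * G / R ^ 3 * s ≤ s * φ s ∧ s * φ s ≤ 4 * π * G * ρ 0 * R / 3 := by
    intro s hs
    have hspos : 0 < s := lt_of_lt_of_le hx0 hs.1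
    have hsIcc : s ∈ Icc (0:ℝ) R := ⟨hspos.le, hs.2⟩
    have hsφ : s * φ s = 4 * π * G * m s / s ^ 2 := by
      rw [hφ s ⟨hspos, hs.2⟩]
      field_simp
      ring
    constructor
    · rw [hsφ, hMval]
      have hkey := hm_key s hsIcc hspos
      rw [div_mul_eq_mul_div, div_le_div_iff₀ (by positivity) (by positivity)]
      nlinarith [mul_le_mul_of_nonneg_left hkey (show (0:ℝ) ≤ 4 * π * G by positivity)]
    · rw [hsφ]
      have hub := hm_ub s hsIcc
      rw [div_le_iff₀ (by positivity)]
      nlinarith [mul_le_mul_of_nonneg_left hub (show (0:ℝ) ≤ 4 * π * G by positivity),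
        mul_nonneg (mul_nonneg (mul_nonneg (mul_nonneg
          (show (0:ℝ) ≤ 4 * π by positivity) hG.le) hρ0.le)
          (sub_nonneg.mpr hs.2)) (sq_nonneg s)]
  -- integrate the bounds
  have hmidint : IntervalIntegrable (fun s => s * φ s) MeasureTheory.volume x R := by
    have heq : (fun s => s * φ s) = fun s => -(-(s * φ s)) := by funext s; ring
    rw [heq]; exact hφint.neg
  have hlow : (∫ s in x..R, M * G / R ^ 3 * s) ≤ ∫ s in x..R, s * φ s := by
    apply intervalIntegral.integral_mono_on hxR.le _ hmidint (fun s hs => (hpt s hs).1)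
    exact ((continuous_const.mul continuous_id).continuousOn).intervalIntegrable
  have hhigh : (∫ s in x..R, s * φ s) ≤ ∫ s in x..R, (4 * π * G * ρ 0 * R / 3 : ℝ) := by
    apply intervalIntegral.integral_mono_on hxR.le hmidint _ (fun s hs => (hpt s hs).2)
    exact (continuousOn_const).intervalIntegrable
  have hlowval : (∫ s in x..R, M * G / R ^ 3 * s) = M * G / R ^ 3 * ((R ^ 2 - x ^ 2) / 2) := by
    rw [intervalIntegral.integral_const_mul]
    have : (∫ s in x..R, s) = (R ^ 2 - x ^ 2) / 2 := by
      have h := integral_pow (a := x) (b := R) 1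
      simpa using h
    rw [this]
  have hhighval : (∫ s in x..R, (4 * π * G * ρ 0 * R / 3 : ℝ)) =
      4 * π * G * ρ 0 * R / 3 * (R - x) := by
    rw [intervalIntegral.integral_const, smul_eq_mul]; ring
  have hMnn : 0 ≤ M := by rw [hMval]; positivity
  constructor
  · rw [hFx]
    refine le_trans ?_ (hlowval ▸ hlow)
    rw [div_mul_eq_mul_div, div_mul_eq_mul_div, div_le_div_iff₀ (by positivity) (by positivity)]
    nlinarith [mul_nonneg (mul_nonneg hMnn hG.le) (mul_nonneg (sub_nonneg.mpr hxR.le) hx0.le),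
      sq_nonneg R, sq_nonneg x]
  · rw [hFx]
    exact le_trans hhigh (le_of_eq hhighval)
end

section
/- Let p be C¹ on [0,∞), C² on (0,∞), with p(0)=0, p(s)>0, p'(s)>0 for s>0, and lim_{s→0+} s p'(s)/p(s) = γ̄ ∈ (4/3, ∞). Let ρ̄ : [0,R̄] → [0,∞) be continuous with ρ̄ > 0 on [0,R̄), ρ̄(R̄)=0, and suppose (p(ρ̄(x)))' = −x ρ̄(x) φ(x) with φ(x) ≥ MG/R̄³ > 0 on (0,R̄). Then for any fixed k > 3/4, the function x ↦ ρ̄(x)^{−1} p(ρ̄(x))^k extends continuously to [0,R̄] with value 0 at x = R̄, and it is nonincreasing on (0,R̄) provided k·s p'(s) ≥ p(s) for all s ∈ (0, ρ̄(0)]. -/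
open Real Set Filter Topology

theorem weight_function_vanishing_and_monotone
    (p : ℝ → ℝ) (γ : ℝ)
    (hp1 : ContDiffOn ℝ 1 p (Ici 0))
    (hp2 : ContDiffOn ℝ 2 p (Ioi 0))
    (hp0 : p 0 = 0)
    (hpos : ∀ s : ℝ, 0 < s → 0 < p s)
    (hpos' : ∀ s : ℝ, 0 < s → 0 < deriv p s)
    (hγ : 4 / 3 < γ)
    (hlim : Tendsto (fun s => s * deriv p s / p s) (𝓝[>] (0:ℝ)) (𝓝 γ))
    (R M G : ℝ) (hR : 0 < R) (hMG : 0 < M * G)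
    (ρ : ℝ → ℝ)
    (hcont : ContinuousOn ρ (Icc 0 R))
    (hρpos : ∀ x ∈ Ico (0:ℝ) R, 0 < ρ x)
    (hρR : ρ R = 0)
    (φ : ℝ → ℝ)
    (hφ : ∀ x ∈ Ioo (0:ℝ) R, M * G / R ^ 3 ≤ φ x)
    (hode : ∀ x ∈ Ioo (0:ℝ) R, HasDerivAt (fun y => p (ρ y)) (-(x * ρ x * φ x)) x)
    (k : ℝ) (hk : 3 / 4 < k)
    (hkp : ∀ s ∈ Ioc (0:ℝ) (ρ 0), p s ≤ k * s * deriv p s) :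
    ContinuousOn (fun x => (p (ρ x)) ^ k / ρ x) (Ico 0 R) ∧
    Tendsto (fun x => (p (ρ x)) ^ k / ρ x) (𝓝[Ico 0 R] R) (𝓝 0) ∧
    AntitoneOn (fun x => (p (ρ x)) ^ k / ρ x) (Ioo 0 R) := by
  have hk0 : (0:ℝ) < k := by linarith
  have hρnn : ∀ x ∈ Icc (0:ℝ) R, 0 ≤ ρ x := by
    intro x hx
    rcases eq_or_lt_of_le hx.2 with h | h
    · rw [h, hρR]
    · exact (hρpos x ⟨hx.1, h⟩).le
  have hpc : ContinuousOn p (Ici 0) := hp1.continuousOn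
  have hdiffp : ∀ s : ℝ, 0 < s → DifferentiableAt ℝ p s := by
    intro s hs
    exact (hp1.differentiableOn one_ne_zero).differentiableAt (Ici_mem_nhds hs)
  have hcont' : ContinuousOn ρ (Ico 0 R) := hcont.mono Ico_subset_Icc_self
  -- Part 1: continuity
  have h1 : ContinuousOn (fun x => (p (ρ x)) ^ k / ρ x) (Ico 0 R) := by
    apply ContinuousOn.div
    · exact (hpc.comp hcont' fun x hx => hρnn x (Ico_subset_Icc_self hx)).rpow_const
        fun x hx => Or.inr hk0.le
    · exact hcont'
    · exact fun x hx => (hρpos x hx).ne'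
  -- choose α with 4/3 < α < γ and k * α > 1
  set α : ℝ := (4/3 + γ)/2 with hαdef
  have hα43 : 4/3 < α := by rw [hαdef]; linarith
  have hαγ : α < γ := by rw [hαdef]; linarith
  have hα0 : 0 < α := by linarith
  have hkα : 1 < α * k := by nlinarith
  -- eventually s p'(s)/p(s) > α near 0
  have hev : ∀ᶠ s in 𝓝[>] (0:ℝ), α < s * deriv p s / p s :=
    hlim.eventually (eventually_gt_nhds hαγ)
  obtain ⟨δ, hδ0, hδ⟩ := mem_nhdsGT_iff_exists_Ioc_subset.mp hev
  rw [mem_Ioi] at hδ0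
  -- p s ≤ C s^α on (0, δ]
  have hmono : MonotoneOn (fun s => p s / s ^ α) (Ioc 0 δ) := by
    apply monotoneOn_of_deriv_nonneg (convex_Ioc 0 δ)
    · apply ContinuousOn.div
      · exact hpc.mono fun s hs => le_of_lt hs.1
      · exact (continuousOn_id).rpow_const fun s hs => Or.inl hs.1.ne'
      · exact fun s hs => (rpow_pos_of_pos hs.1 α).ne'
    · rw [interior_Ioc]
      intro s hs
      exact (((hdiffp s hs.1).div
        (Real.hasDerivAt_rpow_const (Or.inl hs.1.ne')).differentiableAt
        (rpow_pos_of_pos hs.1 α).ne')).differentiableWithinAt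
    · rw [interior_Ioc]
      intro s hs
      have hs0 : (0:ℝ) < s := hs.1
      have hps : 0 < p s := hpos s hs0
      have hder : HasDerivAt (fun s => p s / s ^ α)
          ((deriv p s * s ^ α - p s * (α * s ^ (α - 1))) / (s ^ α) ^ 2) s :=
        ((hdiffp s hs0).hasDerivAt).div (Real.hasDerivAt_rpow_const (Or.inl hs0.ne'))
          (rpow_pos_of_pos hs0 α).ne'
      rw [hder.deriv]
      have hαp : α * p s < s * deriv p s := by
        have := hδ ⟨hs0, hs.2.le⟩
        rw [mem_setOf_eq] at this
        calc α * p s < (s * deriv p s / p s) * p s := by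
              exact mul_lt_mul_of_pos_right this hps
          _ = s * deriv p s := by field_simp
      have hsplit : s ^ α = s * s ^ (α - 1) := by
        have h := Real.rpow_add hs0 1 (α - 1)
        rw [Real.rpow_one, show (1:ℝ) + (α - 1) = α by ring] at h
        exact h
      have hnum : 0 ≤ deriv p s * s ^ α - p s * (α * s ^ (α - 1)) := by
        rw [hsplit]
        have h1 : 0 < s ^ (α - 1) := rpow_pos_of_pos hs0 _
        nlinarith
      positivity
  set C : ℝ := p δ / δ ^ α with hCdef
  have hC : 0 < C := div_pos (hpos δ hδ0) (rpow_pos_of_pos hδ0 α)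
  have hbound : ∀ s ∈ Ioc (0:ℝ) δ, p s ≤ C * s ^ α := by
    intro s hs
    have := hmono hs ⟨hδ0, le_rfl⟩ hs.2
    rwa [div_le_iff₀ (rpow_pos_of_pos hs.1 α)] at this
  -- key limit lemma
  have key : Tendsto (fun s => p s ^ k / s) (𝓝[>] (0:ℝ)) (𝓝 0) := by
    have hmem : Ioc (0:ℝ) δ ∈ 𝓝[>] (0:ℝ) := Ioc_mem_nhdsGT_of_mem ⟨le_rfl, hδ0⟩
    have hupper : ∀ s ∈ Ioc (0:ℝ) δ, p s ^ k / s ≤ C ^ k * s ^ (α * k - 1) := by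
      intro s hs
      have hs0 : (0:ℝ) < s := hs.1
      have h1 : p s ^ k ≤ (C * s ^ α) ^ k :=
        Real.rpow_le_rpow (hpos s hs0).le (hbound s hs) hk0.le
      have h2 : (C * s ^ α) ^ k = C ^ k * s ^ (α * k) := by
        rw [Real.mul_rpow hC.le (rpow_pos_of_pos hs0 α).le, ← Real.rpow_mul hs0.le]
      have h3 : s ^ (α * k) / s = s ^ (α * k - 1) := by
        rw [Real.rpow_sub hs0, Real.rpow_one]
      calc p s ^ k / s ≤ (C * s ^ α) ^ k / s := by gcongr
        _ = C ^ k * (s ^ (α * k) / s) := by rw [h2]; ring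
        _ = C ^ k * s ^ (α * k - 1) := by rw [h3]
    have hrhs : Tendsto (fun s : ℝ => C ^ k * s ^ (α * k - 1)) (𝓝[>] (0:ℝ)) (𝓝 0) := by
      have h0 : Tendsto (fun s : ℝ => s ^ (α * k - 1)) (𝓝 (0:ℝ)) (𝓝 0) := by
        have := (Real.continuousAt_rpow_const 0 (α * k - 1) (Or.inr (by linarith))).tendsto
        rwa [Real.zero_rpow (by linarith : α * k - 1 ≠ 0)] at this
      have h0' : Tendsto (fun s : ℝ => s ^ (α * k - 1)) (𝓝[>] (0:ℝ)) (𝓝 0) :=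
        h0.mono_left nhdsWithin_le_nhds
      simpa using h0'.const_mul (C ^ k)
    refine tendsto_of_tendsto_of_tendsto_of_le_of_le' tendsto_const_nhds hrhs ?_ ?_
    · filter_upwards [hmem] with s hs
      exact div_nonneg (Real.rpow_nonneg (hpos s hs.1).le k) hs.1.le
    · filter_upwards [hmem] with s hs
      exact hupper s hs
  -- Part 2: limit
  have h2 : Tendsto (fun x => (p (ρ x)) ^ k / ρ x) (𝓝[Ico 0 R] R) (𝓝 0) := by
    have hρtend : Tendsto ρ (𝓝[Ico 0 R] R) (𝓝[>] 0) := by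
      rw [tendsto_nhdsWithin_iff]
      constructor
      · have hc := hcont R ⟨hR.le, le_rfl⟩
        rw [ContinuousWithinAt, hρR] at hc
        exact hc.mono_left (nhdsWithin_mono R Ico_subset_Icc_self)
      · filter_upwards [self_mem_nhdsWithin] with x hx
        exact hρpos x hx
    exact key.comp hρtend
  -- Part 3: antitone
  have hpm : StrictMonoOn p (Ici 0) := by
    apply strictMonoOn_of_deriv_pos (convex_Ici 0) hpc
    rw [interior_Ici]
    exact fun s hs => hpos' s hs
  have hpρcont : ContinuousOn (fun x => p (ρ x)) (Icc 0 R) :=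
    hpc.comp hcont fun x hx => hρnn x hx
  have hanti : StrictAntiOn (fun x => p (ρ x)) (Icc 0 R) := by
    apply strictAntiOn_of_deriv_neg (convex_Icc 0 R) hpρcont
    rw [interior_Icc]
    intro x hx
    rw [(hode x hx).deriv]
    have hφx : 0 < φ x := lt_of_lt_of_le (div_pos hMG (pow_pos hR 3)) (hφ x hx)
    have hρx : 0 < ρ x := hρpos x ⟨hx.1.le, hx.2⟩
    nlinarith [mul_pos (mul_pos hx.1 hρx) hφx]
  have hρanti : AntitoneOn ρ (Icc 0 R) := by
    intro x hx y hy hxy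
    rcases eq_or_lt_of_le hxy with h | h
    · rw [h]
    · by_contra hc
      push_neg at hc
      have h1 := hpm (hρnn x hx) (hρnn y hy) hc
      have h2 := hanti hx hy h
      simp only at h2
      linarith
  have hρ00 : 0 < ρ 0 := hρpos 0 ⟨le_rfl, hR⟩
  have hF : MonotoneOn (fun s => p s ^ k / s) (Ioc 0 (ρ 0)) := by
    apply monotoneOn_of_deriv_nonneg (convex_Ioc 0 (ρ 0))
    · apply ContinuousOn.div
      · exact (hpc.mono fun s hs => le_of_lt hs.1).rpow_const fun s hs => Or.inr hk0.le
      · exact continuousOn_id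
      · exact fun s hs => hs.1.ne'
    · rw [interior_Ioc]
      intro s hs
      have hps : p s ≠ 0 := (hpos s hs.1).ne'
      exact ((((hdiffp s hs.1).hasDerivAt.rpow_const (Or.inl hps)).div
        (hasDerivAt_id s) hs.1.ne')).differentiableAt.differentiableWithinAt
    · rw [interior_Ioc]
      intro s hs
      have hs0 : (0:ℝ) < s := hs.1
      have hps : 0 < p s := hpos s hs0
      have hder : HasDerivAt (fun s => p s ^ k / s)
          ((deriv p s * k * p s ^ (k - 1) * s - p s ^ k * 1) / s ^ 2) s :=
        ((hdiffp s hs0).hasDerivAt.rpow_const (Or.inl hps.ne')).div (hasDerivAt_id s) hs0.ne'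
      rw [hder.deriv]
      have hkps := hkp s ⟨hs0, hs.2.le⟩
      have hsplit : p s ^ k = p s ^ (k - 1) * p s := by
        have h := Real.rpow_add hps (k - 1) 1
        rw [Real.rpow_one, show k - 1 + 1 = k by ring] at h
        exact h
      have h1 : 0 < p s ^ (k - 1) := rpow_pos_of_pos hps _
      have hnum : 0 ≤ deriv p s * k * p s ^ (k - 1) * s - p s ^ k * 1 := by
        rw [hsplit]
        nlinarith
      positivity
  have h3 : AntitoneOn (fun x => (p (ρ x)) ^ k / ρ x) (Ioo 0 R) := by
    intro x hx y hy hxy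
    have hxI : x ∈ Icc (0:ℝ) R := ⟨hx.1.le, hx.2.le⟩
    have hyI : y ∈ Icc (0:ℝ) R := ⟨hy.1.le, hy.2.le⟩
    have hρyx : ρ y ≤ ρ x := hρanti hxI hyI hxy
    have h0I : (0:ℝ) ∈ Icc (0:ℝ) R := ⟨le_rfl, hR.le⟩
    have hxm : ρ x ∈ Ioc (0:ℝ) (ρ 0) := ⟨hρpos x ⟨hx.1.le, hx.2⟩, hρanti h0I hxI hx.1.le⟩
    have hym : ρ y ∈ Ioc (0:ℝ) (ρ 0) := ⟨hρpos y ⟨hy.1.le, hy.2⟩, hρanti h0I hyI hy.1.le⟩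
    exact hF hym hxm hρyx
  exact ⟨h1, h2, h3⟩
end
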